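/- arXiv:2107.04076 — 2 statements merged into one kernel-verified Lean document; each statement's English description precedes it below -/
import Mathlib

section
/- For every real r ≥ 1 and all vectors a, b in ℝ^d, the inner product (|a|^{r-1} a − |b|^{r-1} b) · (a − b) is at least (1/2)|a|^{r-1}|a − b|² + (1/2)|b|^{r-1}|a − b|². In particular the map a ↦ |a|^{r-1} a is monotone. -/
/-! With `α = ‖a‖ ^ p` and `β = ‖b‖ ^ p`, expanding the inner product gives
`⟪α • a - β • b, a - b⟫ = (α + β) / 2 * ‖a - b‖ ^ 2 + (α - β) * (‖a‖ ^ 2 - ‖b‖ ^ 2) / 2`,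
and the last term is nonnegative because `t ↦ t ^ p` and `t ↦ t ^ 2` are both increasing on
`[0, ∞)`. -/

open scoped RealInnerProductSpace

section

variable {E : Type*} [NormedAddCommGroup E] [InnerProductSpace ℝ E]

lemma inner_smul_sub_smul_sub_eq (α β : ℝ) (a b : E) :
    ⟪α • a - β • b, a - b⟫ =
      (α + β) / 2 * ‖a - b‖ ^ 2 + (α - β) * (‖a‖ ^ 2 - ‖b‖ ^ 2) / 2 := by
  rw [norm_sub_sq_real]
  simp only [inner_sub_left, inner_sub_right, real_inner_smul_left, real_inner_self_eq_norm_sq,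
    real_inner_comm a b]
  ring

lemma rpow_sub_rpow_mul_sq_sub_sq_nonneg {p x y : ℝ} (hp : 0 ≤ p) (hx : 0 ≤ x) (hy : 0 ≤ y) :
    0 ≤ (x ^ p - y ^ p) * (x ^ 2 - y ^ 2) :=
  ((Real.monotoneOn_rpow_Ici_of_exponent_nonneg hp).monovaryOn
    pow_left_monotoneOn).sub_mul_sub_nonneg hy hx

theorem half_mul_add_half_mul_le_inner_rpow_smul_sub {p : ℝ} (hp : 0 ≤ p) (a b : E) :
    (1/2) * ‖a‖ ^ p * ‖a - b‖ ^ 2 + (1/2) * ‖b‖ ^ p * ‖a - b‖ ^ 2 ≤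
      ⟪‖a‖ ^ p • a - ‖b‖ ^ p • b, a - b⟫ := by
  rw [inner_smul_sub_smul_sub_eq]
  have := rpow_sub_rpow_mul_sq_sub_sq_nonneg hp (norm_nonneg a) (norm_nonneg b)
  linarith

end

theorem damping_monotone (d : ℕ) (r : ℝ) (hr : 1 ≤ r)
    (a b : EuclideanSpace ℝ (Fin d)) :
    (1/2) * ‖a‖ ^ (r - 1) * ‖a - b‖ ^ 2 + (1/2) * ‖b‖ ^ (r - 1) * ‖a - b‖ ^ 2 ≤
      ⟪‖a‖ ^ (r - 1) • a - ‖b‖ ^ (r - 1) • b, a - b⟫ ∧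
    0 ≤ ⟪‖a‖ ^ (r - 1) • a - ‖b‖ ^ (r - 1) • b, a - b⟫ := by
  have h := half_mul_add_half_mul_le_inner_rpow_smul_sub (sub_nonneg.mpr hr) a b
  exact ⟨h, le_trans (by positivity) h⟩
end

section
/- Let u ∈ C_c^∞(ℝ²; ℝ). Then ∫_{ℝ²} u⁴ dx ≤ 2 (∫_{ℝ²} u² dx) (∫_{ℝ²} |∇u|² dx). (Ladyzhenskaya's inequality in two dimensions with constant 2.) -/
open MeasureTheory Real

namespace Lady

noncomputable def d1 (v : ℝ × ℝ → ℝ) (p : ℝ × ℝ) : ℝ := fderiv ℝ v p (1, 0)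
noncomputable def d2 (v : ℝ × ℝ → ℝ) (p : ℝ × ℝ) : ℝ := fderiv ℝ v p (0, 1)

variable {v : ℝ × ℝ → ℝ}

lemma cont_d1 (hv : ContDiff ℝ (⊤ : ℕ∞) v) : Continuous (d1 v) :=
  (hv.continuous_fderiv (by simp)).clm_apply continuous_const

lemma cont_d2 (hv : ContDiff ℝ (⊤ : ℕ∞) v) : Continuous (d2 v) :=
  (hv.continuous_fderiv (by simp)).clm_apply continuous_const

lemma hcs_d1 (hs : HasCompactSupport v) : HasCompactSupport (d1 v) := by
  apply HasCompactSupport.intro (hs.fderiv ℝ)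
  intro p hp
  simp [d1, image_eq_zero_of_notMem_tsupport hp]

lemma hcs_d2 (hs : HasCompactSupport v) : HasCompactSupport (d2 v) := by
  apply HasCompactSupport.intro (hs.fderiv ℝ)
  intro p hp
  simp [d2, image_eq_zero_of_notMem_tsupport hp]

lemma slice1_hcs {f : ℝ × ℝ → ℝ} (hf : HasCompactSupport f) (y : ℝ) :
    HasCompactSupport (fun s => f (s, y)) := by
  apply HasCompactSupport.intro (hf.isCompact.image continuous_fst)
  intro s hs
  by_contra h
  exact hs ⟨(s, y), subset_tsupport f h, rfl⟩

lemma slice2_hcs {f : ℝ × ℝ → ℝ} (hf : HasCompactSupport f) (x : ℝ) :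
    HasCompactSupport (fun t => f (x, t)) := by
  apply HasCompactSupport.intro (hf.isCompact.image continuous_snd)
  intro t ht
  by_contra h
  exact ht ⟨(x, t), subset_tsupport f h, rfl⟩

lemma hasDerivAt_slice1 (hv : ContDiff ℝ (⊤ : ℕ∞) v) (x y : ℝ) :
    HasDerivAt (fun s => v (s, y)) (d1 v (x, y)) x := by
  have h1 : HasDerivAt (fun s : ℝ => (s, y)) ((1 : ℝ), (0 : ℝ)) x :=
    (hasDerivAt_id x).prodMk (hasDerivAt_const x y)
  exact ((hv.differentiable (by simp) (x, y)).hasFDerivAt).comp_hasDerivAt x h1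

lemma hasDerivAt_slice2 (hv : ContDiff ℝ (⊤ : ℕ∞) v) (x y : ℝ) :
    HasDerivAt (fun t => v (x, t)) (d2 v (x, y)) y := by
  have h1 : HasDerivAt (fun t : ℝ => (x, t)) ((0 : ℝ), (1 : ℝ)) y :=
    (hasDerivAt_const y x).prodMk (hasDerivAt_id y)
  exact ((hv.differentiable (by simp) (x, y)).hasFDerivAt).comp_hasDerivAt y h1

lemma sq_le_1 (hv : ContDiff ℝ (⊤ : ℕ∞) v) (hs : HasCompactSupport v) (x y : ℝ) :
    v (x, y) ^ 2 ≤ ∫ t, 2 * |v (t, y)| * |d1 v (t, y)| := by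
  set g : ℝ → ℝ := fun s => v (s, y) ^ 2 with hg
  have hder : ∀ s, HasDerivAt g (2 * v (s, y) * d1 v (s, y)) s := by
    intro s
    have := (hasDerivAt_slice1 hv s y).pow 2
    simpa [hg, Pi.pow_def] using this
  have hg1 : ContDiff ℝ 1 g := by
    have : ContDiff ℝ 1 fun s : ℝ => v (s, y) :=
      (hv.of_le (by simp)).comp (contDiff_id.prodMk contDiff_const)
    exact this.pow 2
  have hc_v : Continuous fun t : ℝ => v (t, y) :=
    hv.continuous.comp (continuous_id.prodMk continuous_const)
  have hc_d : Continuous fun t : ℝ => d1 v (t, y) :=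
    (cont_d1 hv).comp (continuous_id.prodMk continuous_const)
  have hz : ∀ s, s ∉ tsupport (fun s => v (s, y)) → v (s, y) = 0 := by
    intro s hsx
    simpa using image_eq_zero_of_notMem_tsupport hsx
  have hgs : HasCompactSupport g := by
    apply HasCompactSupport.intro (slice1_hcs hs y).isCompact
    intro s hsx
    simp [hg, hz s hsx]
  have hftc := hgs.integral_Iic_deriv_eq hg1 x
  have hderiv_eq : ∀ s, deriv g s = 2 * v (s, y) * d1 v (s, y) := fun s => (hder s).deriv
  have hint1 : Integrable fun t => 2 * |v (t, y)| * |d1 v (t, y)| := by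
    apply Continuous.integrable_of_hasCompactSupport
    · exact (continuous_const.mul hc_v.abs).mul hc_d.abs
    · apply HasCompactSupport.intro (slice1_hcs hs y).isCompact
      intro s hsx
      simp [hz s hsx]
  have hint2 : Integrable fun t => 2 * v (t, y) * d1 v (t, y) := by
    apply Continuous.integrable_of_hasCompactSupport
    · exact (continuous_const.mul hc_v).mul hc_d
    · apply HasCompactSupport.intro (slice1_hcs hs y).isCompact
      intro s hsx
      simp [hz s hsx]
  calc v (x, y) ^ 2 = ∫ s in Set.Iic x, deriv g s := hftc.symm
    _ = ∫ s in Set.Iic x, 2 * v (s, y) * d1 v (s, y) := by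
        exact integral_congr_ae (Filter.Eventually.of_forall fun s => hderiv_eq s)
    _ ≤ ∫ s in Set.Iic x, 2 * |v (s, y)| * |d1 v (s, y)| := by
        apply integral_mono (hint2.restrict) (hint1.restrict)
        intro s
        calc 2 * v (s, y) * d1 v (s, y) ≤ |2 * v (s, y) * d1 v (s, y)| := le_abs_self _
          _ = 2 * |v (s, y)| * |d1 v (s, y)| := by rw [abs_mul, abs_mul]; simp
    _ ≤ ∫ s, 2 * |v (s, y)| * |d1 v (s, y)| := by
        apply setIntegral_le_integral hint1
        filter_upwards with s
        positivity

lemma sq_le_2 (hv : ContDiff ℝ (⊤ : ℕ∞) v) (hs : HasCompactSupport v) (x y : ℝ) :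
    v (x, y) ^ 2 ≤ ∫ t, 2 * |v (x, t)| * |d2 v (x, t)| := by
  set g : ℝ → ℝ := fun s => v (x, s) ^ 2 with hg
  have hder : ∀ s, HasDerivAt g (2 * v (x, s) * d2 v (x, s)) s := by
    intro s
    have := (hasDerivAt_slice2 hv x s).pow 2
    simpa [hg, Pi.pow_def] using this
  have hg1 : ContDiff ℝ 1 g := by
    have : ContDiff ℝ 1 fun s : ℝ => v (x, s) :=
      (hv.of_le (by simp)).comp (contDiff_const.prodMk contDiff_id)
    exact this.pow 2
  have hc_v : Continuous fun t : ℝ => v (x, t) :=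
    hv.continuous.comp (continuous_const.prodMk continuous_id)
  have hc_d : Continuous fun t : ℝ => d2 v (x, t) :=
    (cont_d2 hv).comp (continuous_const.prodMk continuous_id)
  have hz : ∀ s, s ∉ tsupport (fun s => v (x, s)) → v (x, s) = 0 := by
    intro s hsx
    simpa using image_eq_zero_of_notMem_tsupport hsx
  have hgs : HasCompactSupport g := by
    apply HasCompactSupport.intro (slice2_hcs hs x).isCompact
    intro s hsx
    simp [hg, hz s hsx]
  have hftc := hgs.integral_Iic_deriv_eq hg1 y
  have hderiv_eq : ∀ s, deriv g s = 2 * v (x, s) * d2 v (x, s) := fun s => (hder s).deriv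
  have hint1 : Integrable fun t => 2 * |v (x, t)| * |d2 v (x, t)| := by
    apply Continuous.integrable_of_hasCompactSupport
    · exact (continuous_const.mul hc_v.abs).mul hc_d.abs
    · apply HasCompactSupport.intro (slice2_hcs hs x).isCompact
      intro s hsx
      simp [hz s hsx]
  have hint2 : Integrable fun t => 2 * v (x, t) * d2 v (x, t) := by
    apply Continuous.integrable_of_hasCompactSupport
    · exact (continuous_const.mul hc_v).mul hc_d
    · apply HasCompactSupport.intro (slice2_hcs hs x).isCompact
      intro s hsx
      simp [hz s hsx]
  calc v (x, y) ^ 2 = ∫ s in Set.Iic y, deriv g s := hftc.symm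
    _ = ∫ s in Set.Iic y, 2 * v (x, s) * d2 v (x, s) := by
        exact integral_congr_ae (Filter.Eventually.of_forall fun s => hderiv_eq s)
    _ ≤ ∫ s in Set.Iic y, 2 * |v (x, s)| * |d2 v (x, s)| := by
        apply integral_mono (hint2.restrict) (hint1.restrict)
        intro s
        calc 2 * v (x, s) * d2 v (x, s) ≤ |2 * v (x, s) * d2 v (x, s)| := le_abs_self _
          _ = 2 * |v (x, s)| * |d2 v (x, s)| := by rw [abs_mul, abs_mul]; simp
    _ ≤ ∫ s, 2 * |v (x, s)| * |d2 v (x, s)| := by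
        apply setIntegral_le_integral hint1
        filter_upwards with s
        positivity

lemma cs {α : Type*} [MeasurableSpace α] {μ : Measure α} {f g : α → ℝ}
    (hf : MemLp f 2 μ) (hg : MemLp g 2 μ) :
    ∫ p, 2 * |f p| * |g p| ∂μ ≤
      2 * Real.sqrt (∫ p, f p ^ 2 ∂μ) * Real.sqrt (∫ p, g p ^ 2 ∂μ) := by
  have hpq : Real.HolderConjugate 2 2 := by
    exact Real.HolderConjugate.two_two
  have h2 : (ENNReal.ofReal (2:ℝ)) = 2 := by norm_num
  have key := integral_mul_norm_le_Lp_mul_Lq (μ := μ) hpq (h2 ▸ hf) (h2 ▸ hg)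
  have e1 : ∫ a, ‖f a‖ ^ (2:ℝ) ∂μ = ∫ a, f a ^ 2 ∂μ := by
    congr 1; funext a
    rw [show ((2:ℝ)) = ((2:ℕ):ℝ) from by norm_num, Real.rpow_natCast]
    simp [sq_abs]
  have e2 : ∫ a, ‖g a‖ ^ (2:ℝ) ∂μ = ∫ a, g a ^ 2 ∂μ := by
    congr 1; funext a
    rw [show ((2:ℝ)) = ((2:ℕ):ℝ) from by norm_num, Real.rpow_natCast]
    simp [sq_abs]
  rw [e1, e2] at key
  calc ∫ p, 2 * |f p| * |g p| ∂μ = 2 * ∫ p, ‖f p‖ * ‖g p‖ ∂μ := by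
        rw [← integral_const_mul]
        congr 1; funext p
        simp [Real.norm_eq_abs]; ring
    _ ≤ 2 * ((∫ a, f a ^ 2 ∂μ) ^ (1/(2:ℝ)) * (∫ a, g a ^ 2 ∂μ) ^ (1/(2:ℝ))) := by
        linarith [key]
    _ = 2 * Real.sqrt (∫ p, f p ^ 2 ∂μ) * Real.sqrt (∫ p, g p ^ 2 ∂μ) := by
        rw [← Real.sqrt_eq_rpow, ← Real.sqrt_eq_rpow]; ring

theorem key (v : ℝ × ℝ → ℝ) (hv : ContDiff ℝ (⊤ : ℕ∞) v) (hs : HasCompactSupport v) :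
    ∫ p, v p ^ 4 ≤ 2 * (∫ p, v p ^ 2) * (∫ p, d1 v p ^ 2 + d2 v p ^ 2) := by
  have hvc := hv.continuous
  set H1 : ℝ × ℝ → ℝ := fun p => 2 * |v p| * |d1 v p| with hH1
  set H2 : ℝ × ℝ → ℝ := fun p => 2 * |v p| * |d2 v p| with hH2
  have hzv : ∀ p, p ∉ tsupport v → v p = 0 := fun p hp => image_eq_zero_of_notMem_tsupport hp
  have hint_H1 : Integrable H1 := by
    apply Continuous.integrable_of_hasCompactSupport
    · exact (continuous_const.mul hvc.abs).mul (cont_d1 hv).abs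
    · apply HasCompactSupport.intro hs.isCompact
      intro p hp
      simp [hH1, hzv p hp]
  have hint_H2 : Integrable H2 := by
    apply Continuous.integrable_of_hasCompactSupport
    · exact (continuous_const.mul hvc.abs).mul (cont_d2 hv).abs
    · apply HasCompactSupport.intro hs.isCompact
      intro p hp
      simp [hH2, hzv p hp]
  have hint_v4 : Integrable fun p => v p ^ 4 := by
    apply Continuous.integrable_of_hasCompactSupport (hvc.pow 4)
    apply HasCompactSupport.intro hs.isCompact
    intro p hp
    simp [hzv p hp]
  have hint_v2 : Integrable fun p => v p ^ 2 := by
    apply Continuous.integrable_of_hasCompactSupport (hvc.pow 2)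
    apply HasCompactSupport.intro hs.isCompact
    intro p hp
    simp [hzv p hp]
  have hint_d1sq : Integrable fun p => d1 v p ^ 2 := by
    apply Continuous.integrable_of_hasCompactSupport ((cont_d1 hv).pow 2)
    apply HasCompactSupport.intro (hcs_d1 hs).isCompact
    intro p hp
    simp [image_eq_zero_of_notMem_tsupport hp]
  have hint_d2sq : Integrable fun p => d2 v p ^ 2 := by
    apply Continuous.integrable_of_hasCompactSupport ((cont_d2 hv).pow 2)
    apply HasCompactSupport.intro (hcs_d2 hs).isCompact
    intro p hp
    simp [image_eq_zero_of_notMem_tsupport hp]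
  set A := ∫ p, v p ^ 2 with hA
  set B1 := ∫ p, d1 v p ^ 2 with hB1
  set B2 := ∫ p, d2 v p ^ 2 with hB2
  have hAnn : 0 ≤ A := integral_nonneg fun p => sq_nonneg _
  have hB1nn : 0 ≤ B1 := integral_nonneg fun p => sq_nonneg _
  have hB2nn : 0 ≤ B2 := integral_nonneg fun p => sq_nonneg _
  -- Hölder bounds
  have hmem_v : MemLp v 2 (volume : Measure (ℝ × ℝ)) :=
    hvc.memLp_of_hasCompactSupport hs
  have hmem_d1 : MemLp (d1 v) 2 (volume : Measure (ℝ × ℝ)) :=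
    (cont_d1 hv).memLp_of_hasCompactSupport (hcs_d1 hs)
  have hmem_d2 : MemLp (d2 v) 2 (volume : Measure (ℝ × ℝ)) :=
    (cont_d2 hv).memLp_of_hasCompactSupport (hcs_d2 hs)
  have hH1le : ∫ p, H1 p ≤ 2 * Real.sqrt A * Real.sqrt B1 := cs hmem_v hmem_d1
  have hH2le : ∫ p, H2 p ≤ 2 * Real.sqrt A * Real.sqrt B2 := cs hmem_v hmem_d2
  -- marginals
  set F : ℝ → ℝ := fun y => ∫ t, H1 (t, y) with hF
  set G : ℝ → ℝ := fun x => ∫ t, H2 (x, t) with hG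
  have hvol : (volume : Measure (ℝ × ℝ)) = (volume : Measure ℝ).prod volume := rfl
  have hint_H1' : Integrable H1 ((volume : Measure ℝ).prod volume) := hvol ▸ hint_H1
  have hint_H2' : Integrable H2 ((volume : Measure ℝ).prod volume) := hvol ▸ hint_H2
  have hintF : Integrable F := hint_H1'.integral_prod_right
  have hintG : Integrable G := hint_H2'.swap.integral_prod_right
  have hFnn : ∀ y, 0 ≤ F y := fun y =>
    integral_nonneg fun t => by positivity
  have hGnn : ∀ x, 0 ≤ G x := fun x =>
    integral_nonneg fun t => by positivity
  have hFint_eq : ∫ y, F y = ∫ p, H1 p := by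
    have e := integral_integral (μ := (volume : Measure ℝ)) (ν := (volume : Measure ℝ))
      (f := fun y t => H1 (t, y)) hint_H1'.swap
    have e2 := integral_prod_swap (μ := (volume : Measure ℝ)) (ν := (volume : Measure ℝ)) H1
    calc ∫ y, F y = ∫ z : ℝ × ℝ, H1 (z.2, z.1) ∂((volume : Measure ℝ).prod volume) := e
      _ = ∫ p, H1 p ∂((volume : Measure ℝ).prod volume) := e2
      _ = ∫ p, H1 p := by rw [← hvol]
  have hGint_eq : ∫ x, G x = ∫ p, H2 p := by
    have e := integral_integral (μ := (volume : Measure ℝ)) (ν := (volume : Measure ℝ))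
      (f := fun x t => H2 (x, t)) hint_H2'
    calc ∫ x, G x = ∫ z : ℝ × ℝ, H2 (z.1, z.2) ∂((volume : Measure ℝ).prod volume) := e
      _ = ∫ p, H2 p := by rw [← hvol]
  -- pointwise bound
  have hpt : ∀ p : ℝ × ℝ, v p ^ 4 ≤ G p.1 * F p.2 := by
    intro p
    have h1 : v p ^ 2 ≤ F p.2 := by
      simpa using sq_le_1 hv hs p.1 p.2
    have h2 : v p ^ 2 ≤ G p.1 := by
      simpa using sq_le_2 hv hs p.1 p.2
    nlinarith [sq_nonneg (v p), hFnn p.2, hGnn p.1]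
  have hint_GF : Integrable (fun p : ℝ × ℝ => G p.1 * F p.2) := by
    rw [hvol]
    exact hintG.mul_prod hintF
  have step1 : ∫ p, v p ^ 4 ≤ ∫ p : ℝ × ℝ, G p.1 * F p.2 :=
    integral_mono hint_v4 hint_GF hpt
  have step2 : ∫ p : ℝ × ℝ, G p.1 * F p.2 = (∫ x, G x) * ∫ y, F y := by
    rw [hvol]
    exact integral_prod_mul G F
  have hFle : ∫ y, F y ≤ 2 * Real.sqrt A * Real.sqrt B1 := hFint_eq ▸ hH1le
  have hGle : ∫ x, G x ≤ 2 * Real.sqrt A * Real.sqrt B2 := hGint_eq ▸ hH2le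
  have hFnn' : 0 ≤ ∫ y, F y := integral_nonneg hFnn
  have hGnn' : 0 ≤ ∫ x, G x := integral_nonneg hGnn
  have hsum : ∫ p, d1 v p ^ 2 + d2 v p ^ 2 = B1 + B2 := integral_add hint_d1sq hint_d2sq
  rw [hsum]
  have hsA : Real.sqrt A ^ 2 = A := Real.sq_sqrt hAnn
  have hsB1 : Real.sqrt B1 ^ 2 = B1 := Real.sq_sqrt hB1nn
  have hsB2 : Real.sqrt B2 ^ 2 = B2 := Real.sq_sqrt hB2nn
  have hmul : (∫ x, G x) * ∫ y, F y ≤ 2 * A * (B1 + B2) := by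
    nlinarith [Real.sqrt_nonneg A, Real.sqrt_nonneg B1, Real.sqrt_nonneg B2,
      sq_nonneg (Real.sqrt B1 - Real.sqrt B2), mul_nonneg hAnn (sq_nonneg (Real.sqrt B1 - Real.sqrt B2)),
      mul_le_mul hGle hFle hFnn' (by positivity : (0:ℝ) ≤ 2 * Real.sqrt A * Real.sqrt B2)]
  linarith [step1, step2 ▸ hmul]

noncomputable def L2 : (ℝ × ℝ) ≃L[ℝ] EuclideanSpace ℝ (Fin 2) :=
  (ContinuousLinearEquiv.finTwoArrow ℝ ℝ).symm.trans
    (EuclideanSpace.equiv (Fin 2) ℝ).symm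

lemma L2mp : MeasurePreserving (fun p : ℝ × ℝ => L2 p) volume volume := by
  have h1 := (EuclideanSpace.volume_preserving_symm_measurableEquiv_toLp (Fin 2)).symm
  have h2 := (volume_preserving_finTwoArrow ℝ).symm
  exact h1.comp h2

lemma L2e1 : L2 (1, 0) = EuclideanSpace.single 0 1 := by
  ext i
  fin_cases i <;> simp [L2, EuclideanSpace.single]

lemma L2e2 : L2 (0, 1) = EuclideanSpace.single 1 1 := by
  ext i
  fin_cases i <;> simp [L2, EuclideanSpace.single]

lemma grad_norm_sq (u : EuclideanSpace ℝ (Fin 2) → ℝ) (x : EuclideanSpace ℝ (Fin 2)) :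
    ‖gradient u x‖ ^ 2 = (fderiv ℝ u x (EuclideanSpace.single 0 1)) ^ 2 +
      (fderiv ℝ u x (EuclideanSpace.single 1 1)) ^ 2 := by
  have hcomp : ∀ i, gradient u x i = fderiv ℝ u x (EuclideanSpace.single i 1) := by
    intro i
    have h : (inner ℝ (gradient u x) (EuclideanSpace.single i 1) : ℝ) =
        fderiv ℝ u x (EuclideanSpace.single i 1) := InnerProductSpace.toDual_symm_apply
    rw [EuclideanSpace.inner_single_right] at h
    simpa using h
  have hnorm : ‖gradient u x‖ ^ 2 = ∑ i, ‖gradient u x i‖ ^ 2 := by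
    rw [EuclideanSpace.norm_eq]
    rw [Real.sq_sqrt (by positivity)]
  rw [hnorm, Fin.sum_univ_two, hcomp 0, hcomp 1]
  simp [Real.norm_eq_abs, sq_abs]

end Lady

open Lady in
theorem ladyzhenskaya_2d (u : EuclideanSpace ℝ (Fin 2) → ℝ)
    (hu : ContDiff ℝ (⊤ : ℕ∞) u) (hsupp : HasCompactSupport u) :
    ∫ x, (u x) ^ 4 ≤
      2 * (∫ x, (u x) ^ 2) * (∫ x, ‖gradient u x‖ ^ 2) := by
  have hLemb : MeasurableEmbedding (fun p : ℝ × ℝ => L2 p) :=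
    L2.toHomeomorph.measurableEmbedding
  set v : ℝ × ℝ → ℝ := fun p => u (L2 p) with hvdef
  have hv : ContDiff ℝ (⊤ : ℕ∞) v := hu.comp L2.contDiff
  have hsv : HasCompactSupport v := hsupp.comp_homeomorph L2.toHomeomorph
  have hd : ∀ p : ℝ × ℝ, fderiv ℝ v p =
      (fderiv ℝ u (L2 p)).comp (L2 : (ℝ × ℝ) →L[ℝ] EuclideanSpace ℝ (Fin 2)) := by
    intro p
    have hfd : HasFDerivAt v
        ((fderiv ℝ u (L2 p)).comp (L2 : (ℝ × ℝ) →L[ℝ] EuclideanSpace ℝ (Fin 2))) p :=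
      ((hu.differentiable (by simp) (L2 p)).hasFDerivAt).comp p L2.hasFDerivAt
    exact hfd.fderiv
  have hd1 : ∀ p : ℝ × ℝ, d1 v p = fderiv ℝ u (L2 p) (EuclideanSpace.single 0 1) := by
    intro p
    rw [d1, hd p]
    simp [L2e1]
  have hd2 : ∀ p : ℝ × ℝ, d2 v p = fderiv ℝ u (L2 p) (EuclideanSpace.single 1 1) := by
    intro p
    rw [d2, hd p]
    simp [L2e2]
  have eq1 : ∫ x, (u x) ^ 4 = ∫ p, v p ^ 4 :=
    (L2mp.integral_comp hLemb fun x => u x ^ 4).symm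
  have eq2 : ∫ x, (u x) ^ 2 = ∫ p, v p ^ 2 :=
    (L2mp.integral_comp hLemb fun x => u x ^ 2).symm
  have eq3 : ∫ x, ‖gradient u x‖ ^ 2 = ∫ p, d1 v p ^ 2 + d2 v p ^ 2 := by
    rw [← L2mp.integral_comp hLemb fun x => ‖gradient u x‖ ^ 2]
    congr 1
    funext p
    rw [grad_norm_sq u (L2 p), hd1 p, hd2 p]
  rw [eq1, eq2, eq3]
  exact key v hv hsv
end
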